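/- Let α be a composition with an even number of parts, one of whose parts equals t ≥ 3, and let α' be the composition obtained from α by replacing that part by the three consecutive parts t−2, 1, 1. Then for every k, the number of lower ideals of size k of the circular fence poset F̄(α') is greater than or equal to the number of lower ideals of size k of F̄(α); equivalently, R̄(α';q) − R̄(α;q) has nonnegative integer coefficients. -/

import Mathlib

attribute [local instance] Classical.propDecidable

noncomputable section

/-- `α` is a composition: a nonempty list of positive integers. -/
def IsComposition (α : List ℕ) : Prop := α ≠ [] ∧ ∀ p ∈ α, 0 < p

/-- The 0-based index of the segment of the composition `α` containing edge `e`,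
where edge `e` joins nodes `e` and `e+1` (nodes are 0-indexed, so node `i`
is the element `x_{i+1}` of the fence). -/
def segIdx (α : List ℕ) (e : ℕ) : ℕ :=
  ((List.range α.length).filter fun j => decide ((α.take (j + 1)).sum ≤ e)).length

/-- Edge `e` of the fence of `α` points upwards (node `e` ⪯ node `e+1`):
edges in odd (1-based) segments point up, edges in even segments point down. -/
def upEdge (α : List ℕ) (e : ℕ) : Prop := Even (segIdx α e)

/-- The defining relations of the fence poset `F(α)` on `Fin (α.sum + 1)`:
`fenceStep α x y` holds iff `x ⪯ y` is one of the generating (cover) relations. -/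
def fenceStep (α : List ℕ) (x y : Fin (α.sum + 1)) : Prop :=
  (y.val = x.val + 1 ∧ upEdge α x.val) ∨ (x.val = y.val + 1 ∧ ¬ upEdge α y.val)

/-- The order of the fence poset `F(α)`, i.e. the partial order generated by
the defining relations. -/
def fenceLE (α : List ℕ) : Fin (α.sum + 1) → Fin (α.sum + 1) → Prop :=
  Relation.ReflTransGen (fenceStep α)

/-- Lower (order) ideals of the fence poset `F(α)`. -/
def IsFenceIdeal (α : List ℕ) (I : Finset (Fin (α.sum + 1))) : Prop :=
  ∀ x y, fenceLE α x y → y ∈ I → x ∈ I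

/-- `fenceRank α k` is the number of lower ideals of `F(α)` of size `k`;
the rank sequence of `F(α)` is `fenceRank α 0, …, fenceRank α (α.sum + 1)`. -/
def fenceRank (α : List ℕ) (k : ℕ) : ℕ :=
  Nat.card {I : Finset (Fin (α.sum + 1)) // IsFenceIdeal α I ∧ I.card = k}

/-- Defining relations of the circular fence poset `F̄(α)` on `Fin α.sum`:
as for the fence, but node `α.sum` (that is, `x_{n+1}`) is identified with node `0`. -/
def cStep (α : List ℕ) (x y : Fin α.sum) : Prop :=
  (y.val = (x.val + 1) % α.sum ∧ upEdge α x.val) ∨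
  (x.val = (y.val + 1) % α.sum ∧ ¬ upEdge α y.val)

/-- The order of the circular fence poset `F̄(α)`. -/
def cLE (α : List ℕ) : Fin α.sum → Fin α.sum → Prop :=
  Relation.ReflTransGen (cStep α)

/-- Lower (order) ideals of the circular fence poset `F̄(α)`. -/
def IsCIdeal (α : List ℕ) (I : Finset (Fin α.sum)) : Prop :=
  ∀ x y, cLE α x y → y ∈ I → x ∈ I

/-- `cRank α k` is the number of lower ideals of `F̄(α)` of size `k`;
the rank sequence of `F̄(α)` is `cRank α 0, …, cRank α α.sum`. -/
def cRank (α : List ℕ) (k : ℕ) : ℕ :=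
  Nat.card {I : Finset (Fin α.sum) // IsCIdeal α I ∧ I.card = k}

/-- The sequence `a 0, …, a m` is unimodal. -/
def Unimodal (a : ℕ → ℕ) (m : ℕ) : Prop :=
  ∃ j ≤ m, (∀ i < j, a i ≤ a (i + 1)) ∧ ∀ i, j ≤ i → i < m → a (i + 1) ≤ a i

/-- The sequence `a 0, …, a m` is bottom interlacing:
`a m ≤ a 0 ≤ a (m-1) ≤ a 1 ≤ ⋯ ≤ a ⌊m/2⌋`. -/
def BottomInterlacing (a : ℕ → ℕ) (m : ℕ) : Prop :=
  (∀ i, 2 * i ≤ m → a (m - i) ≤ a i) ∧ ∀ i, 2 * i + 1 < m → a i ≤ a (m - 1 - i)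

/-- The sequence `a 0, …, a m` is top interlacing:
`a 0 ≤ a m ≤ a 1 ≤ a (m-1) ≤ ⋯ ≤ a ⌈m/2⌉`. -/
def TopInterlacing (a : ℕ → ℕ) (m : ℕ) : Prop :=
  (∀ i, 2 * i ≤ m → a i ≤ a (m - i)) ∧ ∀ i, 2 * i + 1 < m → a (m - i) ≤ a (i + 1)

/-- The sequence `a 0, …, a m` is symmetric. -/
def SymmetricSeq (a : ℕ → ℕ) (m : ℕ) : Prop := ∀ k ≤ m, a k = a (m - k)

/-- Rowmotion for the order relation `r` on `Fin m`: `rhoRel r I` is the lower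
ideal generated by the minimal elements of the complement of `I`. -/
def rhoRel {m : ℕ} (r : Fin m → Fin m → Prop) (I : Finset (Fin m)) : Finset (Fin m) :=
  Finset.univ.filter fun x => ∃ y, y ∉ I ∧ (∀ z, r z y → z ≠ y → z ∈ I) ∧ r x y

/-- The (forward) orbit of `I` under a rowmotion map `ρ`. -/
def orbitOf {m : ℕ} (ρ : Finset (Fin m) → Finset (Fin m)) (I : Finset (Fin m)) :
    Finset (Finset (Fin m)) :=
  Finset.univ.filter fun J => ∃ k, ρ^[k] I = J

/-- The number of maximal elements of `I` viewed as a subposet of the order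
with relation `r`. -/
def maxCount {m : ℕ} (r : Fin m → Fin m → Prop) (I : Finset (Fin m)) : ℕ :=
  (I.filter fun x => ∀ y ∈ I, r x y → y = x).card

end

/-!
Replacing the part `t ≥ 3` by `t - 2, 1, 1` creates two new segment boundaries, so the parity
of the segment index, i.e. the direction, changes for exactly one edge `e` of the circular fence:
the second-to-last edge of the old segment. Its two neighbouring edges lie in the old segment and
point the same way, so in `F̄(α)` the edge `e` is a cover `u ⋖ v` where nothing else covers `u`
and `v` covers nothing else. The map sending an ideal `I` with `u ∈ I`, `v ∉ I` to
`(I \ {u}) ∪ {v}` and fixing every other ideal is then a size-preserving injection from the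
ideals of `F̄(α)` into those of `F̄(α')`.
-/

section DownClosed

variable {β : Type*}

def IsDownClosed (r : β → β → Prop) (I : Finset β) : Prop :=
  ∀ x y, r x y → y ∈ I → x ∈ I

noncomputable def downClosedCount (r : β → β → Prop) (k : ℕ) : ℕ :=
  Nat.card {I : Finset β // IsDownClosed r I ∧ I.card = k}

theorem isDownClosed_reflTransGen_iff {r : β → β → Prop} {I : Finset β} :
    IsDownClosed (Relation.ReflTransGen r) I ↔ IsDownClosed r I := by
  refine ⟨fun h x y hxy => h x y (.single hxy), fun h x y hxy => ?_⟩
  induction hxy with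
  | refl => exact id
  | tail _ hzy ih => exact fun hy => ih (h _ _ hzy hy)

theorem downClosedCount_reflTransGen (r : β → β → Prop) (k : ℕ) :
    downClosedCount (Relation.ReflTransGen r) k = downClosedCount r k :=
  Nat.card_congr <| .subtypeEquivRight fun _ => and_congr_left' isDownClosed_reflTransGen_iff

end DownClosed

section FlipCover

variable {β : Type*} [DecidableEq β] {r r' : β → β → Prop} {u v : β}

def flipCover (u v : β) (I : Finset β) : Finset β :=
  if u ∈ I ∧ v ∉ I then I.map (Equiv.swap u v).toEmbedding else I

theorem card_flipCover (I : Finset β) : (flipCover u v I).card = I.card := by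
  unfold flipCover; split_ifs <;> simp

theorem isDownClosed_flipCover (hr' : ∀ x y, r' x y → r x y ∨ (x = v ∧ y = u))
    (huv' : ¬ r' u v) (hv : ∀ x, r x v → x = u) (hu : ∀ y, r u y → y = v)
    {I : Finset β} (hI : IsDownClosed r I) : IsDownClosed r' (flipCover u v I) := by
  intro x y hxy' hy
  unfold flipCover at hy ⊢
  split_ifs at hy ⊢ with hsep
  · rw [Finset.mem_map_equiv, Equiv.symm_swap] at hy ⊢
    rcases hr' x y hxy' with hxy | ⟨rfl, rfl⟩
    · by_cases hyu : y = u
      · simp [hyu, hsep.2] at hy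
      by_cases hyv : y = v
      · subst hyv
        obtain rfl := hv x hxy
        exact absurd hxy' huv'
      rw [Equiv.swap_apply_of_ne_of_ne hyu hyv] at hy
      have hxI := hI x y hxy hy
      have hxu : x ≠ u := fun h => hyv (hu y (h ▸ hxy))
      have hxv : x ≠ v := fun h => hsep.2 (h ▸ hxI)
      rwa [Equiv.swap_apply_of_ne_of_ne hxu hxv]
    · simp [hsep.2] at hy
  · rcases hr' x y hxy' with hxy | ⟨rfl, rfl⟩
    · exact hI x y hxy hy
    · by_contra hvI
      exact hsep ⟨hy, hvI⟩

theorem flipCover_injOn (huv : r u v) : Set.InjOn (flipCover u v) {I | IsDownClosed r I} := by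
  have flipped_ne : ∀ I J : Finset β, IsDownClosed r J → u ∈ I ∧ v ∉ I →
      I.map (Equiv.swap u v).toEmbedding ≠ J := by
    rintro I J hJ ⟨huI, hvI⟩ rfl
    have hvJ : v ∈ I.map (Equiv.swap u v).toEmbedding := by simpa [Finset.mem_map_equiv]
    simpa [Finset.mem_map_equiv, hvI] using hJ u v huv hvJ
  intro I hI J hJ hIJ
  unfold flipCover at hIJ
  split_ifs at hIJ with hIsep hJsep hJsep
  · exact Finset.map_injective _ hIJ
  · exact absurd hIJ (flipped_ne I J hJ hIsep)
  · exact absurd hIJ.symm (flipped_ne J I hI hJsep)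
  · exact hIJ

end FlipCover

theorem downClosedCount_le_of_reverse_cover {β : Type*} [Finite β] {r r' : β → β → Prop}
    {u v : β} (huv : r u v) (huv' : ¬ r' u v) (hr' : ∀ x y, r' x y → r x y ∨ (x = v ∧ y = u))
    (hv : ∀ x, r x v → x = u) (hu : ∀ y, r u y → y = v) (k : ℕ) :
    downClosedCount r k ≤ downClosedCount r' k := by
  classical
  exact Nat.card_le_card_of_injective
    (fun I => ⟨flipCover u v I.1, isDownClosed_flipCover hr' huv' hv hu I.2.1,
      (card_flipCover I.1).trans I.2.2⟩)
    fun I J h => Subtype.ext (flipCover_injOn huv I.2.1 J.2.1 (congrArg Subtype.val h))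

def circStep (n : ℕ) (d : ℕ → Prop) (x y : Fin n) : Prop :=
  (y.val = (x.val + 1) % n ∧ d x.val) ∨ (x.val = (y.val + 1) % n ∧ ¬ d y.val)

theorem cRank_eq_downClosedCount (α : List ℕ) (k : ℕ) :
    cRank α k = downClosedCount (circStep α.sum (upEdge α)) k :=
  downClosedCount_reflTransGen (cStep α) k

theorem eq_add_one_mod_iff {n x y : ℕ} (hx : x < n) (hy : y < n) :
    y = (x + 1) % n ↔ x + 1 = y ∨ (x + 1 = n ∧ y = 0) := by
  rcases Nat.lt_or_ge (x + 1) n with h | h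
  · rw [Nat.mod_eq_of_lt h]; omega
  · rw [show x + 1 = n by omega, Nat.mod_self]; omega

theorem circStep_iff {n : ℕ} {d : ℕ → Prop} {x y : Fin n} :
    circStep n d x y ↔
      (x.val + 1 = y.val ∨ (x.val + 1 = n ∧ y.val = 0)) ∧ d x ∨
      (y.val + 1 = x.val ∨ (y.val + 1 = n ∧ x.val = 0)) ∧ ¬ d y := by
  rw [circStep, eq_add_one_mod_iff x.isLt y.isLt, eq_add_one_mod_iff y.isLt x.isLt]

/-- Edge `e` is the cover `e ⋖ e + 1` or `e + 1 ⋖ e`; since its neighbouring edges point the same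
way, it is the only cover above its lower end and below its upper end. -/
theorem downClosedCount_circStep_le_of_flip {n e : ℕ} {d d' : ℕ → Prop} (he : 1 ≤ e)
    (hen : e + 1 < n) (hprev : d (e - 1) ↔ d e) (hnext : d (e + 1) ↔ d e)
    (hflip : d' e ↔ ¬ d e) (hsame : ∀ x ≠ e, d' x ↔ d x) (k : ℕ) :
    downClosedCount (circStep n d) k ≤ downClosedCount (circStep n d') k := by
  by_cases hd : d e
  · apply downClosedCount_le_of_reverse_cover (u := ⟨e, by omega⟩) (v := ⟨e + 1, hen⟩) <;>
      simp only [circStep_iff, Fin.ext_iff] <;> grind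
  · apply downClosedCount_le_of_reverse_cover (u := ⟨e + 1, hen⟩) (v := ⟨e, by omega⟩) <;>
      simp only [circStep_iff, Fin.ext_iff] <;> grind

theorem segIdx_cons (a : ℕ) (l : List ℕ) (e : ℕ) :
    segIdx (a :: l) e = if a ≤ e then segIdx l (e - a) + 1 else 0 := by
  simp only [segIdx, List.length_cons, List.range_succ_eq_map, List.filter_cons,
    List.filter_map, decide_eq_true_eq]
  rw [show (List.take (0 + 1) (a :: l)).sum = a by simp]
  by_cases h : a ≤ e
  · rw [if_pos h, if_pos h, List.length_cons, List.length_map]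
    congr 2
    apply List.filter_congr
    intro j _
    rw [Function.comp_apply, decide_eq_decide]
    simp only [List.take_succ_cons, List.sum_cons]
    omega
  · rw [if_neg h, if_neg h, List.length_map, List.length_eq_zero_iff, List.filter_eq_nil_iff]
    intro j _
    rw [Function.comp_apply, decide_eq_true_iff]
    simp only [List.take_succ_cons, List.sum_cons]
    omega

theorem segIdx_append (l₁ l₂ : List ℕ) (e : ℕ) :
    segIdx (l₁ ++ l₂) e = segIdx l₁ e + if l₁.sum ≤ e then segIdx l₂ (e - l₁.sum) else 0 := by
  induction l₁ generalizing e with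
  | nil => simp [segIdx]
  | cons a l ih =>
    rw [List.cons_append, segIdx_cons, segIdx_cons, ih, List.sum_cons, Nat.sub_sub]
    split_ifs <;> omega

theorem segIdx_of_sum_le {l : List ℕ} {e : ℕ} (h : l.sum ≤ e) : segIdx l e = l.length := by
  induction l generalizing e with
  | nil => rfl
  | cons a l ih =>
    rw [List.sum_cons] at h
    rw [segIdx_cons, if_pos (by omega), ih (by omega), List.length_cons]

theorem upEdge_within_part {A B : List ℕ} {c e : ℕ} (h₁ : A.sum ≤ e) (h₂ : e < A.sum + c) :
    upEdge (A ++ c :: B) e ↔ Even A.length := by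
  rw [upEdge, segIdx_append, segIdx_of_sum_le h₁, if_pos h₁, segIdx_cons, if_neg (by omega),
    add_zero]

theorem upEdge_split_part_iff (A B : List ℕ) (s e : ℕ) :
    upEdge (A ++ (s + 1) :: 1 :: 1 :: B) e ↔
      (upEdge (A ++ (s + 3) :: B) e ↔ e ≠ A.sum + s + 1) := by
  simp only [upEdge, segIdx_append, segIdx_cons, Nat.even_iff]
  rw [show e - A.sum - (s + 1) - 1 - 1 = e - A.sum - (s + 3) by omega]
  split_ifs <;> omega

theorem cRank_le_cRank_split_part (A B : List ℕ) (s k : ℕ) :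
    cRank (A ++ (s + 3) :: B) k ≤ cRank (A ++ (s + 1) :: 1 :: 1 :: B) k := by
  have hsum : (A ++ (s + 1) :: 1 :: 1 :: B).sum = (A ++ (s + 3) :: B).sum := by
    simp only [List.sum_append, List.sum_cons]; omega
  have hlen : A.sum + s + 3 ≤ (A ++ (s + 3) :: B).sum := by
    simp only [List.sum_append, List.sum_cons]; omega
  rw [cRank_eq_downClosedCount, cRank_eq_downClosedCount, hsum]
  refine downClosedCount_circStep_le_of_flip (e := A.sum + s + 1) (by omega) (by omega)
    ?_ ?_ ?_ ?_ k
  · rw [upEdge_within_part, upEdge_within_part] <;> omega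
  · rw [upEdge_within_part, upEdge_within_part] <;> omega
  · rw [upEdge_split_part_iff]; tauto
  · intro x hx
    rw [upEdge_split_part_iff]
    tauto

theorem circular_rank_split_part_mono_general (α : List ℕ)
    (i t : ℕ) (hi : i < α.length) (ht : α.getD i 0 = t)
    (h3 : 3 ≤ t) :
    ∀ k, cRank α k ≤ cRank (α.take i ++ [t - 2, 1, 1] ++ α.drop (i + 1)) k := by
  obtain ⟨s, rfl⟩ : ∃ s, t = s + 3 := ⟨t - 3, by omega⟩
  have hα : α = α.take i ++ (s + 3) :: α.drop (i + 1) := by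
    rw [← ht, List.getD_eq_getElem _ _ hi, ← List.drop_eq_getElem_cons hi, List.take_append_drop]
  intro k
  rw [show s + 3 - 2 = s + 1 by omega, List.append_assoc, List.cons_append, List.cons_append,
    List.cons_append, List.nil_append]
  conv_lhs => rw [hα]
  exact cRank_le_cRank_split_part _ _ s k

/-- if `α'` is obtained from `α` (a composition with an even number of
parts) by replacing a part `t ≥ 3` by the three consecutive parts `t−2, 1, 1`, then
for every `k` the number of size-`k` lower ideals of `F̄(α')` is at least the number
of size-`k` lower ideals of `F̄(α)`, i.e. `R̄(α';q) − R̄(α;q)` has nonnegative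
coefficients. -/
theorem circular_rank_split_part_mono (α : List ℕ) (hα : IsComposition α)
    (heven : Even α.length) (i t : ℕ) (hi : i < α.length) (ht : α.getD i 0 = t)
    (h3 : 3 ≤ t) :
    ∀ k, cRank α k ≤ cRank (α.take i ++ [t - 2, 1, 1] ++ α.drop (i + 1)) k :=
  circular_rank_split_part_mono_general α i t hi ht h3
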